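/- Let p be an odd prime and let u, m, l, w ≥ 0 be integers with u + l ≥ m + w. Then ∑_{i∈ℤ} C(u−m+l, i(p−1)+l) · C(i(p−1), w) = ∑_{v=0}^{w} (−1)^{w−v} · C(l+w−v−1, w−v) · C(u−m+l, v) · M_{u−m+l−v, l−v}, where in the left-hand sum C(u−m+l, i(p−1)+l) is the usual binomial coefficient (zero unless 0 ≤ i(p−1)+l ≤ u−m+l) and C(i(p−1), w) is the generalized binomial coefficient with integer top i(p−1). -/

import Mathlib

/-- `Mfun p u n = ∑_{i ∈ ℤ} C(u, i(p-1)+n)`, written as a finite sum over the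
potential values `k = i(p-1)+n` with `0 ≤ k ≤ u`. -/
def Mfun (p u : ℕ) (n : ℤ) : ℤ :=
  ∑ k ∈ Finset.range (u + 1), if ((p : ℤ) - 1) ∣ ((k : ℤ) - n) then (u.choose k : ℤ) else 0

/-- The descending factorial `z(z-1)⋯(z-n+1)` of a rational number. -/
def descFac (z : ℚ) (n : ℕ) : ℚ := ∏ i ∈ Finset.range n, (z - i)

/-- The generalized binomial coefficient `C(z, n)` for `z ∈ ℚ`, `n ∈ ℤ`:
`z(z-1)⋯(z-n+1)/n!` for `n ≥ 0`, and `0` for `n < 0`. -/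
def qchoose (z : ℚ) (n : ℤ) : ℚ :=
  if 0 ≤ n then descFac z n.toNat / (Nat.factorial n.toNat : ℚ) else 0

/-!
Vandermonde's identity for binomial rings gives `C(k - l, w) = ∑_v C(k, v) C(-l, w - v)`, and
`C(-l, n) = (-1)^n C(l + n - 1, n)`. Substituting and exchanging the two sums, it remains to
evaluate `∑_{k ≡ l mod p-1} C(U, k) C(k, v)`, which is `C(U, v) M_{U-v, l-v}` because
`C(U, k) C(k, v) = C(U, v) C(U - v, k - v)`.
-/

open Finset

lemma descPochhammer_smeval_eq_descFac (z : ℚ) (n : ℕ) :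
    (descPochhammer ℤ n).smeval z = descFac z n := by
  rw [descFac, ← descPochhammer_eval_eq_prod_range, ← Polynomial.aeval_eq_smeval,
    ← descPochhammer_map (algebraMap ℤ ℚ), Polynomial.eval_map_algebraMap]

lemma qchoose_natCast (z : ℚ) (n : ℕ) : qchoose z n = Ring.choose z n := by
  rw [qchoose, if_pos n.cast_nonneg, Int.toNat_natCast, Ring.choose_eq_smul,
    descPochhammer_smeval_eq_descFac, smul_eq_mul, div_eq_inv_mul]

lemma neg_one_pow_mul_qchoose (x : ℚ) (n : ℕ) :
    (-1) ^ n * qchoose (x + n - 1) n = Ring.choose (-x) n := by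
  rw [qchoose_natCast, Ring.choose_neg, Units.smul_def, Int.coe_negOnePow_natCast, zsmul_eq_mul]
  push_cast
  rfl

lemma qchoose_natCast_sub_natCast (k l w : ℕ) :
    qchoose ((k : ℚ) - l) w = ∑ v ∈ range (w + 1),
      (-1) ^ (w - v) * qchoose ((l : ℚ) + w - v - 1) ((w : ℤ) - v) * (k.choose v : ℚ) := by
  rw [qchoose_natCast, sub_eq_add_neg, Ring.add_choose_eq w (Commute.all _ _),
    Nat.sum_antidiagonal_eq_sum_range_succ_mk]
  refine sum_congr rfl fun v hv => ?_
  have hvw : v ≤ w := Nat.lt_succ_iff.mp (mem_range.mp hv)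
  rw [Ring.choose_natCast, ← neg_one_pow_mul_qchoose, mul_comm]
  push_cast [hvw]
  rw [← add_sub_assoc]

lemma sum_choose_mul_choose_ite_dvd (p U v : ℕ) (l : ℤ) :
    ∑ k ∈ range (U + 1),
        (if ((p : ℤ) - 1) ∣ ((k : ℤ) - l) then (U.choose k * k.choose v : ℤ) else 0) =
      U.choose v * Mfun p (U - v) (l - v) := by
  by_cases hvU : v ≤ U
  · have hsplit : U + 1 = v + (U - v + 1) := by omega
    rw [hsplit, sum_range_add, Mfun, mul_sum]
    have hlow : ∀ k ∈ range v,
        (if ((p : ℤ) - 1) ∣ ((k : ℤ) - l) then (U.choose k * k.choose v : ℤ) else 0) = 0 :=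
      fun k hk => by
        rw [Nat.choose_eq_zero_of_lt (mem_range.mp hk), Nat.cast_zero, mul_zero, ite_self]
    rw [sum_eq_zero hlow, zero_add]
    refine sum_congr rfl fun j _ => ?_
    have hchoose : (U.choose (v + j) * (v + j).choose v : ℤ) = U.choose v * (U - v).choose j := by
      have := Nat.choose_mul (n := U) (k := v + j) (s := v) (Nat.le_add_right v j)
      rw [Nat.add_sub_cancel_left] at this
      exact_mod_cast this
    rw [mul_ite, mul_zero, hchoose, Nat.cast_add, show (v : ℤ) + j - l = j - (l - v) by ring]
  · have hUv : U < v := not_le.mp hvU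
    rw [Nat.choose_eq_zero_of_lt hUv, Nat.cast_zero, zero_mul]
    refine sum_eq_zero fun k hk => ?_
    rw [Nat.choose_eq_zero_of_lt ((mem_range.mp hk).trans_le hUv), Nat.cast_zero, mul_zero,
      ite_self]

theorem stmt_6_general (p : ℕ) (u m l w : ℕ) :
    (∑ k ∈ Finset.range (u + l - m + 1),
        if ((p : ℤ) - 1) ∣ ((k : ℤ) - l) then
          ((u + l - m).choose k : ℚ) * qchoose ((k : ℚ) - l) (w : ℤ)
        else 0) =
      ∑ v ∈ Finset.range (w + 1),
        (-1 : ℚ) ^ (w - v) * qchoose ((l : ℚ) + w - v - 1) ((w : ℤ) - v) *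
          ((u + l - m).choose v : ℚ) * (Mfun p (u + l - m - v) ((l : ℤ) - v) : ℚ) := by
  set U := u + l - m
  calc _ = ∑ k ∈ range (U + 1), ∑ v ∈ range (w + 1),
        (-1) ^ (w - v) * qchoose ((l : ℚ) + w - v - 1) ((w : ℤ) - v) *
          (if ((p : ℤ) - 1) ∣ ((k : ℤ) - l) then (U.choose k * k.choose v : ℚ) else 0) := by
        refine sum_congr rfl fun k _ => ?_
        split_ifs
        · rw [qchoose_natCast_sub_natCast, mul_sum]
          exact sum_congr rfl fun v _ => by ring
        · simp
    _ = _ := by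
        rw [sum_comm]
        refine sum_congr rfl fun v _ => ?_
        have hinner := congrArg (Int.cast : ℤ → ℚ) (sum_choose_mul_choose_ite_dvd p U v l)
        push_cast [apply_ite (Int.cast : ℤ → ℚ)] at hinner
        rw [← mul_sum, hinner]
        ring

/-- `∑_{i ∈ ℤ} C(u-m+l, i(p-1)+l)·C(i(p-1), w)
  = ∑_{v=0}^{w} (-1)^{w-v} C(l+w-v-1, w-v) C(u-m+l, v) M_{u-m+l-v, l-v}`.
The left-hand sum is written over the potential values `k = i(p-1)+l` with
`0 ≤ k ≤ u-m+l`, and `C(i(p-1), w) = C(k-l, w)` is a generalized binomial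
coefficient with integer top. -/
theorem stmt_6 (p : ℕ) (hp : p.Prime) (hodd : Odd p) (u m l w : ℕ)
    (h : m + w ≤ u + l) :
    (∑ k ∈ Finset.range (u + l - m + 1),
        if ((p : ℤ) - 1) ∣ ((k : ℤ) - l) then
          ((u + l - m).choose k : ℚ) * qchoose ((k : ℚ) - l) (w : ℤ)
        else 0) =
      ∑ v ∈ Finset.range (w + 1),
        (-1 : ℚ) ^ (w - v) * qchoose ((l : ℚ) + w - v - 1) ((w : ℤ) - v) *
          ((u + l - m).choose v : ℚ) * (Mfun p (u + l - m - v) ((l : ℤ) - v) : ℚ) :=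
  stmt_6_general p u m l w
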